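/- Let m ≥ 0, v ∈ ℝ³ with |v| < 1/2 fixed, and |k| > 0. Then ∫_{S²} dΩ(θ,φ) (|v−w|² + |k|² − 2cos θ |v−w||k| + m²)^{−1/2} ≤ C/|k| for every w ∈ ℝ³, where θ is the angle between k and v−w and C is a universal constant independent of m, v, w. Explicitly: ∫₀^{2π}dφ ∫₀^π dθ sin θ (a² + b² − 2ab cos θ + m²)^{−1/2} ≤ C/b for all a ≥ 0, b > 0, m ≥ 0. -/

import Mathlib

/-!
Completing the square, `a² + b² - 2ab cos θ = (a - b cos θ)² + (b sin θ)²`, so the integrand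
`sin θ / √(a² + b² - 2ab cos θ + m²)` is bounded by `1 / b` pointwise, whatever `a` and `m` are.
-/

open Real

lemma sq_mul_sin_le (a b m θ : ℝ) :
    (b * sin θ) ^ 2 ≤ a ^ 2 + b ^ 2 - 2 * a * b * cos θ + m ^ 2 := by
  nlinarith [sin_sq_add_cos_sq θ, sq_nonneg (a - b * cos θ), sq_nonneg m]

lemma abs_sin_div_sqrt_le_inv (a m θ : ℝ) {b : ℝ} (hb : 0 < b) :
    |sin θ / √(a ^ 2 + b ^ 2 - 2 * a * b * cos θ + m ^ 2)| ≤ b⁻¹ := by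
  set D := a ^ 2 + b ^ 2 - 2 * a * b * cos θ + m ^ 2
  rw [abs_div, abs_of_nonneg (sqrt_nonneg D)]
  rcases (sqrt_nonneg D).eq_or_lt with hD | hD
  · rw [← hD, div_zero]
    positivity
  · have hsin : b * |sin θ| ≤ √D := by
      simpa [abs_mul, abs_of_pos hb] using abs_le_sqrt (sq_mul_sin_le a b m θ)
    rw [div_le_iff₀ hD, inv_mul_eq_div, le_div_iff₀ hb]
    linarith

/-- **m-independent angular integral estimate.** There is a universal
constant `C` (independent of `a`, `b`, `m`) such that for all `a ≥ 0`, `b > 0`, `m ≥ 0`,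
`∫₀^{2π}dφ ∫₀^π dθ sin θ (a² + b² − 2ab cos θ + m²)^{−1/2} ≤ C/b`. -/
theorem angular_integral_bound :
    ∃ C > (0 : ℝ), ∀ a b m : ℝ, 0 ≤ a → 0 < b → 0 ≤ m →
      (∫ _φ in (0 : ℝ)..(2 * Real.pi),
        ∫ θ in (0 : ℝ)..Real.pi,
          Real.sin θ / Real.sqrt (a ^ 2 + b ^ 2 - 2 * a * b * Real.cos θ + m ^ 2)) ≤
        C / b := by
  refine ⟨2 * π ^ 2, by positivity, fun a b m _ hb _ => ?_⟩
  have hinner : ‖∫ θ in (0 : ℝ)..π, sin θ / √(a ^ 2 + b ^ 2 - 2 * a * b * cos θ + m ^ 2)‖ ≤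
      b⁻¹ * |π - 0| :=
    intervalIntegral.norm_integral_le_of_norm_le_const
      fun θ _ => abs_sin_div_sqrt_le_inv a m θ hb
  calc _ ≤ ‖∫ _φ in (0 : ℝ)..2 * π,
          ∫ θ in (0 : ℝ)..π, sin θ / √(a ^ 2 + b ^ 2 - 2 * a * b * cos θ + m ^ 2)‖ :=
        le_abs_self _
    _ ≤ b⁻¹ * |π - 0| * |2 * π - 0| :=
        intervalIntegral.norm_integral_le_of_norm_le_const fun _ _ => hinner
    _ = 2 * π ^ 2 / b := by
        rw [sub_zero, sub_zero, abs_of_pos pi_pos, abs_of_pos (by positivity)]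
        ring
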